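/- Under Assumptions A and B, let {xᵗ} be generated by SCP_ls and for each t let λᵗ be a Lagrange multiplier of the t-th subproblem (so that λᵗ ∈ ℝ₊ᵐ satisfies the complementarity condition λᵗᵢ bar Gᵢ(x^{t+1}, xᵗ, L_gᵗ) = 0 and the first-order condition 0 ∈ ∇f(xᵗ) − ξᵗ + (L_fᵗ + ⟨λᵗ, L_gᵗ⟩)(x^{t+1} − xᵗ) + ∂P₁(x^{t+1}) + Σᵢ λᵗᵢ ∇gᵢ(xᵗ)). Then the sequence {λᵗ} is bounded, and every accumulation point of {xᵗ} is a stationary point of (P). -/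

import Mathlib

open Set Filter Topology Metric Bornology RealInnerProductSpace
open scoped Classical

noncomputable section

abbrev Euc (n : ℕ) : Type := EuclideanSpace ℝ (Fin n)

/-- Convex subdifferential of a real-valued function on an inner product space. -/
def ConvexSubdiff {H : Type*} [NormedAddCommGroup H] [InnerProductSpace ℝ H]
    (P : H → ℝ) (x : H) : Set H :=
  {ζ | ∀ y, ⟪ζ, y - x⟫ ≤ P y - P x}

/-- Regular (Fréchet) subdifferential of an extended-real-valued function. -/
def RegularSubdiff {H : Type*} [NormedAddCommGroup H] [InnerProductSpace ℝ H]
    (h : H → EReal) (x : H) : Set H :=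
  {ζ | h x ≠ ⊤ ∧ h x ≠ ⊥ ∧ ∀ ε : ℝ, 0 < ε →
    ∀ᶠ z in 𝓝 x,
      (((h x).toReal + ⟪ζ, z - x⟫ - ε * ‖z - x‖ : ℝ) : EReal) ≤ h z}

/-- Limiting (Mordukhovich) subdifferential. -/
def LimSubdiff {H : Type*} [NormedAddCommGroup H] [InnerProductSpace ℝ H]
    (h : H → EReal) (x : H) : Set H :=
  {ζ | ∃ xs ζs : ℕ → H, (∀ k, ζs k ∈ RegularSubdiff h (xs k)) ∧
    Tendsto xs atTop (𝓝 x) ∧ Tendsto (fun k => h (xs k)) atTop (𝓝 (h x)) ∧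
    Tendsto ζs atTop (𝓝 ζ)}

/-- The Kurdyka–Łojasiewicz property with exponent `α` at a point. -/
def KLExpAt {H : Type*} [NormedAddCommGroup H] [InnerProductSpace ℝ H]
    (h : H → EReal) (α : ℝ) (xhat : H) : Prop :=
  ∃ a₀ : ℝ, 0 < a₀ ∧ ∃ a : ℝ, 0 < a ∧ ∃ V ∈ 𝓝 xhat, ∀ x ∈ V,
    h xhat < h x → h x < h xhat + (a : EReal) →
    1 ≤ a₀ * (1 - α) * ((h x).toReal - (h xhat).toReal) ^ (-α) *
        infDist 0 (LimSubdiff h x)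

/-- The general Kurdyka–Łojasiewicz property at a point. -/
def KLAt {H : Type*} [NormedAddCommGroup H] [InnerProductSpace ℝ H]
    (h : H → EReal) (xhat : H) : Prop :=
  ∃ a : ℝ, 0 < a ∧ ∃ V ∈ 𝓝 xhat, ∃ φ φ' : ℝ → ℝ,
    φ 0 = 0 ∧ ContinuousOn φ (Ico 0 a) ∧ ConcaveOn ℝ (Ico 0 a) φ ∧
    (∀ s ∈ Ioo 0 a, HasDerivAt φ (φ' s) s ∧ 0 < φ' s) ∧
    ∀ x ∈ V, h xhat < h x → h x < h xhat + (a : EReal) →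
      1 ≤ φ' ((h x).toReal - (h xhat).toReal) * infDist 0 (LimSubdiff h x)

/-- The extended objective of problem (P). -/
def Fobj {n m : ℕ} (f P1 P2 : Euc n → ℝ) (g : Fin m → Euc n → ℝ) (x : Euc n) : EReal :=
  if ∀ i, g i x ≤ 0 then ((f x + P1 x - P2 x : ℝ) : EReal) else ⊤

/-- The moving balls constraint functions. -/
def barG {n m : ℕ} (g : Fin m → Euc n → ℝ) (g' : Fin m → Euc n → Euc n)
    (x y : Euc n) (w : EuclideanSpace ℝ (Fin m)) (i : Fin m) : ℝ :=
  g i y + ⟪g' i y, x - y⟫ + w i / 2 * ‖x - y‖ ^ 2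

/-- The space `ℝⁿ × ℝⁿ × ℝᵐ` with the (L²) Euclidean inner product. -/
abbrev PS (n m : ℕ) : Type :=
  WithLp 2 (Euc n × WithLp 2 (Euc n × EuclideanSpace ℝ (Fin m)))

/-- The potential function `bar F`. -/
def barF {n m : ℕ} (f P1 P2 : Euc n → ℝ) (g : Fin m → Euc n → ℝ)
    (g' : Fin m → Euc n → Euc n)
    (p : PS n m) : EReal :=
  if ∀ i, barG g g' p.ofLp.1 p.ofLp.2.ofLp.1 p.ofLp.2.ofLp.2 i ≤ 0 then
    ((f p.ofLp.1 + P1 p.ofLp.1 - P2 p.ofLp.1 : ℝ) : EReal) else ⊤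

/-- Stationary points of problem (P). -/
def IsStationaryPt {n m : ℕ} (f P1 P2 : Euc n → ℝ) (f' : Euc n → Euc n)
    (g : Fin m → Euc n → ℝ) (g' : Fin m → Euc n → Euc n) (x : Euc n) : Prop :=
  (∀ i, g i x ≤ 0) ∧ ∃ lam : Fin m → ℝ, (∀ i, 0 ≤ lam i) ∧
    (∀ i, lam i * g i x = 0) ∧
    ∃ u ∈ ConvexSubdiff P1 x, ∃ v ∈ ConvexSubdiff P2 x,
      f' x + u - v + ∑ i, lam i • g' i x = 0

/-- Assumptions A (smoothness, Lipschitz gradients, level-boundedness) and B (MFCQ). -/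
def AssumptionAB {n m : ℕ} (f P1 P2 : Euc n → ℝ) (f' : Euc n → Euc n)
    (g : Fin m → Euc n → ℝ) (g' : Fin m → Euc n → Euc n)
    (Lf : ℝ) (Lg : Fin m → ℝ) : Prop :=
  (∀ x, HasGradientAt f (f' x) x) ∧ LipschitzWith Lf.toNNReal f' ∧
  ConvexOn ℝ univ P1 ∧ Continuous P1 ∧ ConvexOn ℝ univ P2 ∧ Continuous P2 ∧
  (∀ i x, HasGradientAt (g i) (g' i x) x) ∧
  (∀ i, LipschitzWith (Lg i).toNNReal (g' i)) ∧
  {x : Euc n | ∀ i, g i x ≤ 0}.Nonempty ∧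
  (∀ σ : ℝ, IsBounded {x | Fobj f P1 P2 g x ≤ (σ : EReal)}) ∧
  (∀ x : Euc n, (∀ i, g i x ≤ 0) → ∃ d, ∀ i, g i x = 0 → ⟪g' i x, d⟫ < 0)

/-- The sequences generated by the SCP_ls algorithm. -/
structure SCPlsSeq {n m : ℕ} (f P1 P2 : Euc n → ℝ) (f' : Euc n → Euc n)
    (g : Fin m → Euc n → ℝ) (g' : Fin m → Euc n → Euc n)
    (c Llo : ℝ) (x ξ : ℕ → Euc n) (Lfs : ℕ → ℝ)
    (Lgs : ℕ → EuclideanSpace ℝ (Fin m)) : Prop where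
  feas0 : ∀ i, g i (x 0) ≤ 0
  subgrad : ∀ t, ξ t ∈ ConvexSubdiff P2 (x t)
  Lf_lb : ∀ t, Llo ≤ Lfs t
  Lg_lb : ∀ t i, Llo ≤ Lgs t i
  bdd : ∃ M : ℝ, ∀ t, Lfs t ≤ M ∧ ∀ i, Lgs t i ≤ M
  feas_sub : ∀ t i, barG g g' (x (t + 1)) (x t) (Lgs t) i ≤ 0
  min : ∀ t z, (∀ i, barG g g' z (x t) (Lgs t) i ≤ 0) →
    ⟪f' (x t) - ξ t, x (t + 1) - x t⟫ + Lfs t / 2 * ‖x (t + 1) - x t‖ ^ 2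
        + P1 (x (t + 1))
      ≤ ⟪f' (x t) - ξ t, z - x t⟫ + Lfs t / 2 * ‖z - x t‖ ^ 2 + P1 z
  uniq : ∀ t z, (∀ i, barG g g' z (x t) (Lgs t) i ≤ 0) →
    ⟪f' (x t) - ξ t, z - x t⟫ + Lfs t / 2 * ‖z - x t‖ ^ 2 + P1 z
      ≤ ⟪f' (x t) - ξ t, x (t + 1) - x t⟫ + Lfs t / 2 * ‖x (t + 1) - x t‖ ^ 2
        + P1 (x (t + 1)) → z = x (t + 1)
  feas : ∀ t i, g i (x (t + 1)) ≤ 0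
  descent : ∀ t, f (x (t + 1)) + P1 (x (t + 1)) - P2 (x (t + 1)) ≤
    f (x t) + P1 (x t) - P2 (x t) - c / 2 * ‖x (t + 1) - x t‖ ^ 2

/-- Cluster points of a sequence (limits of subsequences). -/
def seqClusterPts {X : Type*} [TopologicalSpace X] (u : ℕ → X) : Set X :=
  {p | ∃ φ : ℕ → ℕ, StrictMono φ ∧ Tendsto (u ∘ φ) atTop (𝓝 p)}


/-! Each step decreases `f + P₁ - P₂` by `(c/2)‖xᵗ⁺¹ - xᵗ‖²`; since the iterates stay in a bounded
level set, where this function is bounded below, the steps tend to zero, and the subgradients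
`ξᵗ`, `uᵗ` as well as `∇f(xᵗ)` stay bounded. The first-order conditions of the subproblems then
say that `∑ λᵗᵢ ∇gᵢ(xᵗ)` is bounded up to a term of size `(∑ λᵗᵢ) · o(1)`. If the multipliers were
unbounded, normalising them to sum one and passing to a convergent subsequence would give a nonzero
nonnegative combination of active constraint gradients at a feasible point that vanishes,
contradicting MFCQ. Once the multipliers are bounded, the same passage to the limit along a
subsequence turns the optimality conditions of the subproblems into the KKT conditions of (P) at
any cluster point. -/

section ConvexSubdiff

variable {H : Type*} [NormedAddCommGroup H] [InnerProductSpace ℝ H] {P : H → ℝ}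

theorem norm_le_of_mem_convexSubdiff {z ζ : H} {C : ℝ} (hC : ∀ y ∈ closedBall z 1, |P y| ≤ C)
    (hζ : ζ ∈ ConvexSubdiff P z) : ‖ζ‖ ≤ 2 * C := by
  have hz := abs_le.1 (hC z (mem_closedBall_self zero_le_one))
  rcases eq_or_ne ζ 0 with rfl | hζ0
  · rw [norm_zero]; linarith
  have hζ0' : ‖ζ‖ ≠ 0 := norm_ne_zero_iff.2 hζ0
  set y := z + ‖ζ‖⁻¹ • ζ
  have hy : y ∈ closedBall z 1 := by
    rw [mem_closedBall, dist_eq_norm, add_sub_cancel_left, norm_smul, norm_inv, norm_norm,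
      inv_mul_cancel₀ hζ0']
  have hinner : ⟪ζ, y - z⟫ = ‖ζ‖ := by
    rw [add_sub_cancel_left, real_inner_smul_right, real_inner_self_eq_norm_sq]
    field_simp
  linarith [hζ y, abs_le.1 (hC y hy)]

theorem exists_norm_le_of_mem_convexSubdiff [ProperSpace H] (hP : Continuous P) {K : Set H}
    (hK : IsBounded K) : ∃ C, ∀ z ∈ K, ∀ ζ ∈ ConvexSubdiff P z, ‖ζ‖ ≤ C := by
  obtain ⟨C, hC⟩ := (isCompact_of_isClosed_isBounded isClosed_cthickening
    (hK.cthickening (δ := 1))).exists_bound_of_continuousOn hP.continuousOn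
  exact ⟨2 * C, fun z hz ζ hζ => norm_le_of_mem_convexSubdiff
    (fun y hy => hC y (closedBall_subset_cthickening hz 1 hy)) hζ⟩

theorem mem_convexSubdiff_of_tendsto (hP : Continuous P) {α : Type*} {l : Filter α} [l.NeBot]
    {zs ζs : α → H} {z ζ : H} (h : ∀ k, ζs k ∈ ConvexSubdiff P (zs k))
    (hz : Tendsto zs l (𝓝 z)) (hζ : Tendsto ζs l (𝓝 ζ)) : ζ ∈ ConvexSubdiff P z := fun y =>
  le_of_tendsto_of_tendsto' (hζ.inner (tendsto_const_nhds.sub hz))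
    (tendsto_const_nhds.sub ((hP.tendsto z).comp hz)) fun k => h k y

end ConvexSubdiff

theorem isBounded_range_comp {X Y : Type*} [PseudoMetricSpace X] [ProperSpace X]
    [PseudoMetricSpace Y] {φ : X → Y} (hφ : Continuous φ) {x : ℕ → X} (hx : IsBounded (range x)) :
    IsBounded (range (φ ∘ x)) := by
  rw [range_comp]
  exact (hx.isCompact_closure.image hφ).isBounded.subset (image_mono subset_closure)

theorem tendsto_zero_of_le_sub_succ {a b : ℕ → ℝ} (ha : BddBelow (range a)) (hb : ∀ t, 0 ≤ b t)
    (hab : ∀ t, b t ≤ a t - a (t + 1)) : Tendsto b atTop (𝓝 0) := by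
  have hanti : Antitone a := antitone_nat_of_succ_le fun t => by linarith [hb t, hab t]
  have hlim := tendsto_atTop_ciInf hanti ha
  exact squeeze_zero hb hab (by simpa using hlim.sub (hlim.comp (tendsto_add_atTop_nat 1)))

theorem abs_add_sum_mul_le {ι : Type*} (s : Finset ι) {a B : ℝ} {b lam : ι → ℝ} (ha : |a| ≤ B)
    (hb : ∀ i, |b i| ≤ B) (hlam : ∀ i, 0 ≤ lam i) :
    |a + ∑ i ∈ s, lam i * b i| ≤ B + (∑ i ∈ s, lam i) * B := by
  refine (abs_add_le _ _).trans (add_le_add ha ?_)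
  calc |∑ i ∈ s, lam i * b i| ≤ ∑ i ∈ s, lam i * |b i| := by
        refine (Finset.abs_sum_le_sum_abs _ _).trans_eq (Finset.sum_congr rfl fun i _ => ?_)
        rw [abs_mul, abs_of_nonneg (hlam i)]
    _ ≤ (∑ i ∈ s, lam i) * B := by
        rw [Finset.sum_mul]
        exact Finset.sum_le_sum fun i _ => mul_le_mul_of_nonneg_left (hb i) (hlam i)

theorem tendsto_inv_smul_of_norm_le {E α : Type*} [NormedAddCommGroup E] [NormedSpace ℝ E]
    {l : Filter α} {w : α → E} {s ε : α → ℝ} {C : ℝ} (hs : Tendsto s l atTop)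
    (hε : Tendsto ε l (𝓝 0)) (hw : ∀ k, ‖w k‖ ≤ C + s k * ε k) :
    Tendsto (fun k => (s k)⁻¹ • w k) l (𝓝 0) := by
  rw [tendsto_zero_iff_norm_tendsto_zero]
  have hlim : Tendsto (fun k => (s k)⁻¹ * C + ε k) l (𝓝 0) := by
    simpa using (hs.inv_tendsto_atTop.mul_const C).add hε
  refine squeeze_zero' (Eventually.of_forall fun k => norm_nonneg _) ?_ hlim
  filter_upwards [hs.eventually_gt_atTop 0] with k hk
  rw [norm_smul, norm_inv, Real.norm_of_nonneg hk.le]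
  calc (s k)⁻¹ * ‖w k‖ ≤ (s k)⁻¹ * (C + s k * ε k) := by gcongr; exact hw k
    _ = (s k)⁻¹ * C + ε k := by field_simp

theorem mul_eq_zero_of_tendsto_of_mul_eq_zero {E α : Type*} [TopologicalSpace E] {l : Filter α}
    [l.NeBot] {φ : E → ℝ} (hφ : Continuous φ) {y : α → E} {yb : E} (hy : Tendsto y l (𝓝 yb)) {a G : α → ℝ} {A : ℝ}
    (ha : Tendsto a l (𝓝 A)) (hG : Tendsto (fun k => G k - φ (y k)) l (𝓝 0))
    (hmul : ∀ k, a k * G k = 0) : A * φ yb = 0 := by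
  have hG' : Tendsto G l (𝓝 (φ yb)) := by simpa using hG.add ((hφ.tendsto yb).comp hy)
  exact tendsto_nhds_unique (ha.mul hG') (by simp only [hmul]; exact tendsto_const_nhds)

section Multipliers

variable {E ι : Type*} [NormedAddCommGroup E] [InnerProductSpace ℝ E] [Fintype ι]

theorem eq_zero_of_sum_smul_eq_zero_of_inner_neg {v : ι → E} {μ : ι → ℝ} {d : E}
    (hμ : ∀ i, 0 ≤ μ i) (hd : ∀ i, μ i ≠ 0 → ⟪v i, d⟫ < 0) (hsum : ∑ i, μ i • v i = 0) :
    μ = 0 := by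
  have hterm : ∀ i ∈ Finset.univ, μ i * ⟪v i, d⟫ ≤ 0 := fun i _ => by
    rcases eq_or_ne (μ i) 0 with h | h
    · rw [h, zero_mul]
    · exact mul_nonpos_of_nonneg_of_nonpos (hμ i) (hd i h).le
  have hzero : ∑ i, μ i * ⟪v i, d⟫ = 0 := by
    simpa [sum_inner, real_inner_smul_left] using congrArg (⟪·, d⟫) hsum
  funext i
  by_contra h
  exact (mul_neg_of_pos_of_neg ((hμ i).lt_of_ne' h) (hd i h)).ne
    ((Finset.sum_eq_zero_iff_of_nonpos hterm).1 hzero i (Finset.mem_univ i))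

variable {g : ι → E → ℝ} {g' : ι → E → E}

theorem eq_zero_of_tendsto_of_mfcq (hg : ∀ i, Continuous (g i)) (hg' : ∀ i, Continuous (g' i))
    (hmfcq : ∀ x, (∀ i, g i x ≤ 0) → ∃ d, ∀ i, g i x = 0 → ⟪g' i x, d⟫ < 0)
    {α : Type*} {l : Filter α} [l.NeBot] {y : α → E} {yb : E} (hy : Tendsto y l (𝓝 yb))
    (hfeas : ∀ k i, g i (y k) ≤ 0) {μ G : α → ι → ℝ} {μb : ι → ℝ} (hμ : ∀ k i, 0 ≤ μ k i)
    (hμb : Tendsto μ l (𝓝 μb)) (hG : ∀ i, Tendsto (fun k => G k i - g i (y k)) l (𝓝 0))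
    (hcompl : ∀ k i, μ k i * G k i = 0)
    (hsum : Tendsto (fun k => ∑ i, μ k i • g' i (y k)) l (𝓝 0)) : μb = 0 := by
  have hμbi := tendsto_pi_nhds.1 hμb
  obtain ⟨d, hd⟩ := hmfcq yb fun i =>
    le_of_tendsto' ((hg i).tendsto yb |>.comp hy) fun k => hfeas k i
  refine eq_zero_of_sum_smul_eq_zero_of_inner_neg (fun i => ge_of_tendsto' (hμbi i) fun k => hμ k i)
    (fun i hi => hd i ?_) (tendsto_nhds_unique ?_ hsum)
  · exact (mul_eq_zero.1 (mul_eq_zero_of_tendsto_of_mul_eq_zero (hg i) hy (hμbi i) (hG i)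
      fun k => hcompl k i)).resolve_left hi
  · exact tendsto_finsetSum _ fun i _ => (hμbi i).smul ((hg' i).tendsto yb |>.comp hy)

theorem exists_bound_multipliers_of_mfcq [ProperSpace E] (hg : ∀ i, Continuous (g i))
    (hg' : ∀ i, Continuous (g' i))
    (hmfcq : ∀ x, (∀ i, g i x ≤ 0) → ∃ d, ∀ i, g i x = 0 → ⟪g' i x, d⟫ < 0)
    {y : ℕ → E} (hy : IsBounded (range y)) (hfeas : ∀ k i, g i (y k) ≤ 0) {lam G : ℕ → ι → ℝ}
    (hlam : ∀ k i, 0 ≤ lam k i) (hG : ∀ i, Tendsto (fun k => G k i - g i (y k)) atTop (𝓝 0))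
    (hcompl : ∀ k i, lam k i * G k i = 0) {C : ℝ} {ε : ℕ → ℝ} (hε : Tendsto ε atTop (𝓝 0))
    (hres : ∀ k, ‖∑ i, lam k i • g' i (y k)‖ ≤ C + (∑ i, lam k i) * ε k) :
    ∃ M, ∀ k i, lam k i ≤ M := by
  set s : ℕ → ℝ := fun k => ∑ i, lam k i
  have hle_s : ∀ k i, lam k i ≤ s k := fun k i =>
    Finset.single_le_sum (fun j _ => hlam k j) (Finset.mem_univ i)
  suffices hs : IsBoundedUnder (· ≤ ·) atTop s by
    obtain ⟨M, hM⟩ := hs.bddAbove_range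
    exact ⟨M, fun k i => (hle_s k i).trans (hM (mem_range_self k))⟩
  by_contra hunb
  have hfreq : ∀ N : ℕ, ∃ᶠ k in atTop, (N : ℝ) + 1 ≤ s k := fun N => by
    by_contra h
    exact hunb ⟨N + 1, (not_frequently.1 h).mono fun k hk => (not_le.1 hk).le⟩
  obtain ⟨φ, hφ, hsφ⟩ := extraction_forall_of_frequently hfreq
  have hs_pos : ∀ k, 0 < s (φ k) := fun k => by linarith [hsφ k, k.cast_nonneg (α := ℝ)]
  set μ : ℕ → ι → ℝ := fun k i => lam (φ k) i / s (φ k)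
  have hμ : ∀ k i, 0 ≤ μ k i := fun k i => div_nonneg (hlam _ i) (hs_pos k).le
  have hμ_sum : ∀ k, ∑ i, μ k i = 1 := fun k => by
    simp only [μ, ← Finset.sum_div]
    exact div_self (hs_pos k).ne'
  have hμ_mem : ∀ k, μ k ∈ closedBall (0 : ι → ℝ) 1 := fun k => by
    refine mem_closedBall_zero_iff.2 ((pi_norm_le_iff_of_nonneg zero_le_one).2 fun i => ?_)
    rw [Real.norm_of_nonneg (hμ k i), div_le_one (hs_pos k)]
    exact hle_s _ i
  obtain ⟨⟨yb, μb⟩, -, ψ, hψ, hlim⟩ := tendsto_subseq_of_bounded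
    (hy.prod isBounded_closedBall) (x := fun k => (y (φ k), μ k))
    fun k => mk_mem_prod (mem_range_self _) (hμ_mem k)
  have hyb : Tendsto (fun k => y (φ (ψ k))) atTop (𝓝 yb) := hlim.fst_nhds
  have hμb : Tendsto (fun k => μ (ψ k)) atTop (𝓝 μb) := hlim.snd_nhds
  have hθ : Tendsto (φ ∘ ψ) atTop atTop := (hφ.comp hψ).tendsto_atTop
  have hsθ : Tendsto (fun k => s (φ (ψ k))) atTop atTop :=
    tendsto_atTop_mono (fun k => (le_add_of_nonneg_right zero_le_one).trans (hsφ (ψ k)))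
      (tendsto_natCast_atTop_atTop.comp hψ.tendsto_atTop)
  have hμb_zero : μb = 0 := by
    refine eq_zero_of_tendsto_of_mfcq hg hg' hmfcq hyb (fun k => hfeas _) (fun k => hμ _) hμb
      (fun i => (hG i).comp hθ) (fun k i => ?_) ?_
    · simp only [μ]
      rw [div_mul_eq_mul_div, hcompl, zero_div]
    · have hsum : ∀ k, ∑ i, μ k i • g' i (y (φ k))
          = (s (φ k))⁻¹ • ∑ i, lam (φ k) i • g' i (y (φ k)) := fun k => by simp only [μ, Finset.smul_sum, smul_smul, div_eq_inv_mul]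
      simp only [hsum]
      exact tendsto_inv_smul_of_norm_le hsθ (hε.comp hθ) fun k => hres _
  have hμb_sum : ∑ i, μb i = 1 :=
    tendsto_nhds_unique (tendsto_finsetSum _ fun i _ => tendsto_pi_nhds.1 hμb i)
      (by simp only [hμ_sum]; exact tendsto_const_nhds)
  simp [hμb_zero] at hμb_sum

end Multipliers

theorem isStationaryPt_of_tendsto {n m : ℕ} {f P1 P2 : Euc n → ℝ} {f' : Euc n → Euc n}
    {g : Fin m → Euc n → ℝ} {g' : Fin m → Euc n → Euc n} (hP1 : Continuous P1)
    (hP2 : Continuous P2) (hf' : Continuous f') (hg : ∀ i, Continuous (g i))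
    (hg' : ∀ i, Continuous (g' i)) {y z ξ u : ℕ → Euc n} {xs : Euc n}
    (hy : Tendsto y atTop (𝓝 xs)) (hz : Tendsto z atTop (𝓝 xs)) (hfeas : ∀ k i, g i (y k) ≤ 0)
    {lam G : ℕ → Fin m → ℝ} {M : ℝ} (hlam : ∀ k i, 0 ≤ lam k i) (hM : ∀ k i, lam k i ≤ M)
    (hG : ∀ i, Tendsto (fun k => G k i - g i (y k)) atTop (𝓝 0))
    (hcompl : ∀ k i, lam k i * G k i = 0) (hξ : ∀ k, ξ k ∈ ConvexSubdiff P2 (y k))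
    (hu : ∀ k, u k ∈ ConvexSubdiff P1 (z k))
    (hres : Tendsto (fun k => f' (y k) - ξ k + u k + ∑ i, lam k i • g' i (y k)) atTop (𝓝 0)) :
    IsStationaryPt f P1 P2 f' g g' xs := by
  obtain ⟨Cξ, hCξ⟩ := exists_norm_le_of_mem_convexSubdiff hP2 (isBounded_range_of_tendsto y hy)
  obtain ⟨Cu, hCu⟩ := exists_norm_le_of_mem_convexSubdiff hP1 (isBounded_range_of_tendsto z hz)
  obtain ⟨⟨lb, ξb, ub⟩, -, ψ, hψ, hlim⟩ := tendsto_subseq_of_bounded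
    ((isBounded_Icc 0 fun _ => M).prod (isBounded_closedBall.prod isBounded_closedBall))
    (x := fun k => (lam k, ξ k, u k)) fun k =>
      mk_mem_prod (show lam k ∈ Icc 0 fun _ => M from ⟨hlam k, hM k⟩) <| mk_mem_prod
        (mem_closedBall_zero_iff.2 (hCξ _ (mem_range_self k) _ (hξ k)))
        (mem_closedBall_zero_iff.2 (hCu _ (mem_range_self k) _ (hu k)))
  have hψ' := hψ.tendsto_atTop
  have hyψ := hy.comp hψ'
  have hlb : ∀ i, Tendsto (fun k => lam (ψ k) i) atTop (𝓝 (lb i)) :=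
    tendsto_pi_nhds.1 hlim.fst_nhds
  have hξb : Tendsto (fun k => ξ (ψ k)) atTop (𝓝 ξb) := hlim.snd_nhds.fst_nhds
  have hub : Tendsto (fun k => u (ψ k)) atTop (𝓝 ub) := hlim.snd_nhds.snd_nhds
  refine ⟨fun i => le_of_tendsto' ((hg i).tendsto xs |>.comp hy) fun k => hfeas k i, lb,
    fun i => ge_of_tendsto' (hlb i) fun k => hlam _ i,
    fun i => mul_eq_zero_of_tendsto_of_mul_eq_zero (hg i) hyψ (hlb i) ((hG i).comp hψ')
      fun k => hcompl _ i,
    ub, mem_convexSubdiff_of_tendsto hP1 (fun k => hu (ψ k)) (hz.comp hψ') hub,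
    ξb, mem_convexSubdiff_of_tendsto hP2 (fun k => hξ (ψ k)) hyψ hξb, ?_⟩
  have hlim_res : Tendsto (fun k => f' (y (ψ k)) - ξ (ψ k) + u (ψ k)
      + ∑ i, lam (ψ k) i • g' i (y (ψ k))) atTop (𝓝 (f' xs - ξb + ub + ∑ i, lb i • g' i xs)) :=
    (((hf'.tendsto xs).comp hyψ).sub hξb).add hub |>.add <|
      tendsto_finsetSum _ fun i _ => (hlb i).smul ((hg' i).tendsto xs |>.comp hyψ)
  rw [← tendsto_nhds_unique hlim_res (hres.comp hψ')]
  abel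

namespace SCPlsSeq

variable {n m : ℕ} {f P1 P2 : Euc n → ℝ} {f' : Euc n → Euc n} {g : Fin m → Euc n → ℝ}
  {g' : Fin m → Euc n → Euc n} {c Llo : ℝ} {x ξ : ℕ → Euc n} {Lfs : ℕ → ℝ}
  {Lgs : ℕ → EuclideanSpace ℝ (Fin m)}

theorem feasible (hseq : SCPlsSeq f P1 P2 f' g g' c Llo x ξ Lfs Lgs) : ∀ t i, g i (x t) ≤ 0
  | 0 => hseq.feas0
  | t + 1 => hseq.feas t

theorem antitone_objective (hseq : SCPlsSeq f P1 P2 f' g g' c Llo x ξ Lfs Lgs) (hc : 0 ≤ c) :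
    Antitone fun t => f (x t) + P1 (x t) - P2 (x t) :=
  antitone_nat_of_succ_le fun t =>
    (hseq.descent t).trans (sub_le_self _ (by positivity))

theorem isBounded_range (hseq : SCPlsSeq f P1 P2 f' g g' c Llo x ξ Lfs Lgs) (hc : 0 ≤ c)
    (hlevel : ∀ σ : ℝ, IsBounded {x | Fobj f P1 P2 g x ≤ (σ : EReal)}) : IsBounded (range x) :=
  (hlevel _).subset <| range_subset_iff.2 fun t => by
    simp only [mem_ofPred_eq, Fobj, if_pos (hseq.feasible t)]
    exact EReal.coe_le_coe_iff.2 (hseq.antitone_objective hc (Nat.zero_le t))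

theorem tendsto_sub_succ (hseq : SCPlsSeq f P1 P2 f' g g' c Llo x ξ Lfs Lgs) (hc : 0 < c)
    (hf : Continuous f) (hP1 : Continuous P1) (hP2 : Continuous P2) (hx : IsBounded (range x)) :
    Tendsto (fun t => x (t + 1) - x t) atTop (𝓝 0) := by
  obtain ⟨C, hC⟩ := isBounded_iff_forall_norm_le.1
    (isBounded_range_comp ((hf.add hP1).sub hP2) hx)
  have hsq : Tendsto (fun t => c / 2 * ‖x (t + 1) - x t‖ ^ 2) atTop (𝓝 0) :=
    tendsto_zero_of_le_sub_succ (a := fun t => f (x t) + P1 (x t) - P2 (x t))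
      ⟨-C, forall_mem_range.2 fun t => neg_le_of_abs_le (hC _ (mem_range_self t))⟩
      (fun t => by positivity) fun t => by linarith [hseq.descent t]
  have hsq' : Tendsto (fun t => ‖x (t + 1) - x t‖ ^ 2) atTop (𝓝 0) := by
    simpa using (hsq.const_mul (2 / c)).congr fun t => by field_simp
  rw [tendsto_zero_iff_norm_tendsto_zero]
  simpa [Real.sqrt_sq (norm_nonneg _)] using hsq'.sqrt

theorem exists_abs_stepsize_le (hseq : SCPlsSeq f P1 P2 f' g g' c Llo x ξ Lfs Lgs) :
    ∃ B, ∀ t, |Lfs t| ≤ B ∧ ∀ i, |Lgs t i| ≤ B := by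
  obtain ⟨M, hM⟩ := hseq.bdd
  refine ⟨max M (-Llo), fun t => ⟨abs_le.2 ⟨?_, ?_⟩, fun i => abs_le.2 ⟨?_, ?_⟩⟩⟩
  · linarith [le_max_right M (-Llo), hseq.Lf_lb t]
  · exact (hM t).1.trans (le_max_left _ _)
  · linarith [le_max_right M (-Llo), hseq.Lg_lb t i]
  · exact ((hM t).2 i).trans (le_max_left _ _)

end SCPlsSeq

section Residuals

variable {n m : ℕ} {P1 P2 : Euc n → ℝ} {f' : Euc n → Euc n} {g : Fin m → Euc n → ℝ}
  {g' : Fin m → Euc n → Euc n} {x ξ u : ℕ → Euc n} {Lfs : ℕ → ℝ} {Lgs : ℕ → EuclideanSpace ℝ (Fin m)} {lam : ℕ → Fin m → ℝ}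
  {B : ℝ}

theorem tendsto_barG_sub (hΔ : Tendsto (fun t => x (t + 1) - x t) atTop (𝓝 0))
    (hx : IsBounded (range x)) {i : Fin m} (hg' : Continuous (g' i)) (hB : ∀ t, |Lgs t i| ≤ B) :
    Tendsto (fun t => barG g g' (x (t + 1)) (x t) (Lgs t) i - g i (x t)) atTop (𝓝 0) := by
  obtain ⟨K, hK⟩ := isBounded_iff_forall_norm_le.1 (isBounded_range_comp hg' hx)
  have hΔn := tendsto_zero_iff_norm_tendsto_zero.1 hΔ
  refine squeeze_zero_norm (fun t => ?_)
    (by simpa using (hΔn.const_mul K).add ((hΔn.pow 2).const_mul (B / 2)))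
  simp only [barG, add_sub_cancel_left, add_assoc]
  refine (norm_add_le _ _).trans (add_le_add ?_ ?_)
  · rw [Real.norm_eq_abs]
    exact (abs_real_inner_le_norm _ _).trans
      (mul_le_mul_of_nonneg_right (hK _ (mem_range_self t)) (norm_nonneg _))
  · rw [norm_mul, norm_div, Real.norm_eq_abs, Real.norm_two, norm_pow, norm_norm]
    gcongr
    exact hB t

theorem norm_kkt_residual_le (hB : ∀ t, |Lfs t| ≤ B ∧ ∀ i, |Lgs t i| ≤ B)
    (hlam : ∀ t i, 0 ≤ lam t i)
    (hfoc : ∀ t, f' (x t) - ξ t + (Lfs t + ∑ i, lam t i * Lgs t i) • (x (t + 1) - x t) + u t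
      + ∑ i, lam t i • g' i (x t) = 0) (t : ℕ) :
    ‖f' (x t) - ξ t + u t + ∑ i, lam t i • g' i (x t)‖
      ≤ (B + (∑ i, lam t i) * B) * ‖x (t + 1) - x t‖ := by
  have hres : f' (x t) - ξ t + u t + ∑ i, lam t i • g' i (x t)
      = -((Lfs t + ∑ i, lam t i * Lgs t i) • (x (t + 1) - x t)) := by
    rw [eq_neg_iff_add_eq_zero, ← hfoc t]
    abel
  rw [hres, norm_neg, norm_smul, Real.norm_eq_abs]
  exact mul_le_mul_of_nonneg_right
    (abs_add_sum_mul_le _ (hB t).1 (hB t).2 (hlam t)) (norm_nonneg _)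

theorem exists_norm_sum_multiplier_smul_le (hP1 : Continuous P1) (hP2 : Continuous P2)
    (hf' : Continuous f') (hx : IsBounded (range x)) (hξ : ∀ t, ξ t ∈ ConvexSubdiff P2 (x t))
    (hu : ∀ t, u t ∈ ConvexSubdiff P1 (x (t + 1))) (hB : ∀ t, |Lfs t| ≤ B ∧ ∀ i, |Lgs t i| ≤ B)
    (hlam : ∀ t i, 0 ≤ lam t i)
    (hfoc : ∀ t, f' (x t) - ξ t + (Lfs t + ∑ i, lam t i * Lgs t i) • (x (t + 1) - x t) + u t
      + ∑ i, lam t i • g' i (x t) = 0) :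
    ∃ C, ∀ t, ‖∑ i, lam t i • g' i (x t)‖
      ≤ C + (∑ i, lam t i) * (B * ‖x (t + 1) - x t‖) := by
  obtain ⟨Kf, hKf⟩ := isBounded_iff_forall_norm_le.1 (isBounded_range_comp hf' hx)
  obtain ⟨Kξ, hKξ⟩ := exists_norm_le_of_mem_convexSubdiff hP2 hx
  obtain ⟨Ku, hKu⟩ := exists_norm_le_of_mem_convexSubdiff hP1 hx
  obtain ⟨D, hD⟩ := isBounded_iff_forall_norm_le.1 (hx.sub hx)
  refine ⟨Kf + Kξ + Ku + B * D, fun t => ?_⟩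
  have hr : ‖f' (x t) - ξ t + u t‖ ≤ Kf + Kξ + Ku :=
    (norm_add_le _ _).trans <| add_le_add ((norm_sub_le _ _).trans <|
      add_le_add (hKf _ (mem_range_self t)) (hKξ _ (mem_range_self t) _ (hξ t)))
      (hKu _ (mem_range_self _) _ (hu t))
  have hΔ : ‖x (t + 1) - x t‖ ≤ D := hD _ (sub_mem_sub (mem_range_self _) (mem_range_self _))
  have hB0 : 0 ≤ B := (abs_nonneg _).trans (hB 0).1
  calc ‖∑ i, lam t i • g' i (x t)‖
      = ‖f' (x t) - ξ t + u t + ∑ i, lam t i • g' i (x t) - (f' (x t) - ξ t + u t)‖ := by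
        rw [add_sub_cancel_left]
    _ ≤ ‖f' (x t) - ξ t + u t + ∑ i, lam t i • g' i (x t)‖ + ‖f' (x t) - ξ t + u t‖ :=
        norm_sub_le _ _
    _ ≤ (B + (∑ i, lam t i) * B) * ‖x (t + 1) - x t‖ + (Kf + Kξ + Ku) :=
        add_le_add (norm_kkt_residual_le hB hlam hfoc t) hr
    _ ≤ Kf + Kξ + Ku + B * D + (∑ i, lam t i) * (B * ‖x (t + 1) - x t‖) := by
        have hsplit : (B + (∑ i, lam t i) * B) * ‖x (t + 1) - x t‖
            = B * ‖x (t + 1) - x t‖ + (∑ i, lam t i) * (B * ‖x (t + 1) - x t‖) := by ring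
        linarith [mul_le_mul_of_nonneg_left hΔ hB0]

theorem tendsto_kkt_residual (hΔ : Tendsto (fun t => x (t + 1) - x t) atTop (𝓝 0))
    (hB : ∀ t, |Lfs t| ≤ B ∧ ∀ i, |Lgs t i| ≤ B) (hlam : ∀ t i, 0 ≤ lam t i) {M : ℝ}
    (hM : ∀ t i, lam t i ≤ M)
    (hfoc : ∀ t, f' (x t) - ξ t + (Lfs t + ∑ i, lam t i * Lgs t i) • (x (t + 1) - x t) + u t
      + ∑ i, lam t i • g' i (x t) = 0) :
    Tendsto (fun t => f' (x t) - ξ t + u t + ∑ i, lam t i • g' i (x t)) atTop (𝓝 0) := by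
  have hB0 : 0 ≤ B := (abs_nonneg _).trans (hB 0).1
  refine squeeze_zero_norm (fun t => (norm_kkt_residual_le hB hlam hfoc t).trans ?_)
    (by simpa using (tendsto_norm_zero.comp hΔ).const_mul (B + m * M * B))
  gcongr
  calc ∑ i, lam t i ≤ ∑ _i : Fin m, M := Finset.sum_le_sum fun i _ => hM t i
    _ = m * M := by simp

end Residuals

theorem stmt5_general {n m : ℕ} (f P1 P2 : Euc n → ℝ) (f' : Euc n → Euc n)
    (g : Fin m → Euc n → ℝ) (g' : Fin m → Euc n → Euc n)
    (Lf : ℝ) (Lg : Fin m → ℝ)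
    (hAB : AssumptionAB f P1 P2 f' g g' Lf Lg)
    (c Llo : ℝ) (hc : 0 < c)
    (x ξ : ℕ → Euc n) (Lfs : ℕ → ℝ) (Lgs : ℕ → EuclideanSpace ℝ (Fin m))
    (hseq : SCPlsSeq f P1 P2 f' g g' c Llo x ξ Lfs Lgs)
    (lam : ℕ → Fin m → ℝ)
    (hlam_nonneg : ∀ t i, 0 ≤ lam t i)
    (hcompl : ∀ t i, lam t i * barG g g' (x (t + 1)) (x t) (Lgs t) i = 0)
    (hfoc : ∀ t, ∃ u ∈ ConvexSubdiff P1 (x (t + 1)),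
      f' (x t) - ξ t + (Lfs t + ∑ i, lam t i * Lgs t i) • (x (t + 1) - x t) + u
        + ∑ i, lam t i • g' i (x t) = 0) :
    (∃ M : ℝ, ∀ t i, lam t i ≤ M) ∧
    ∀ xstar : Euc n, xstar ∈ seqClusterPts x →
      IsStationaryPt f P1 P2 f' g g' xstar := by
  obtain ⟨hf, hf'lip, -, hP1, -, hP2, hg, hg'lip, -, hlevel, hmfcq⟩ := hAB
  have hfc : Continuous f := continuous_iff_continuousAt.2 fun z => (hf z).continuousAt
  have hgc : ∀ i, Continuous (g i) := fun i =>
    continuous_iff_continuousAt.2 fun z => (hg i z).continuousAt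
  have hg'c : ∀ i, Continuous (g' i) := fun i => (hg'lip i).continuous
  have hx := hseq.isBounded_range hc.le hlevel
  have hΔ := hseq.tendsto_sub_succ hc hfc hP1 hP2 hx
  obtain ⟨B, hB⟩ := hseq.exists_abs_stepsize_le
  have hG := fun i => tendsto_barG_sub (g := g) hΔ hx (hg'c i) fun t => (hB t).2 i
  choose u hu hfoc using hfoc
  obtain ⟨C, hC⟩ := exists_norm_sum_multiplier_smul_le hP1 hP2 hf'lip.continuous hx
    hseq.subgrad hu hB hlam_nonneg hfoc
  obtain ⟨M, hM⟩ := exists_bound_multipliers_of_mfcq hgc hg'c hmfcq hx hseq.feasible hlam_nonneg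
    hG hcompl (by simpa using (tendsto_norm_zero.comp hΔ).const_mul B) hC
  refine ⟨⟨M, hM⟩, fun xs ⟨φ, hφ, hxφ⟩ => ?_⟩
  have hφ' := hφ.tendsto_atTop
  refine isStationaryPt_of_tendsto hP1 hP2 hf'lip.continuous hgc hg'c hxφ
    (by simpa using hxφ.add (hΔ.comp hφ')) (fun k => hseq.feasible _) (fun k => hlam_nonneg _)
    (fun k => hM _) (fun i => (hG i).comp hφ') (fun k => hcompl _) (fun k => hseq.subgrad _)
    (fun k => hu _) ((tendsto_kkt_residual hΔ hB hlam_nonneg hM hfoc).comp hφ')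

/-- the Lagrange multipliers of the SCP_ls subproblems are bounded, and
every accumulation point of the iterates is a stationary point of (P). -/
theorem stmt5 {n m : ℕ} (f P1 P2 : Euc n → ℝ) (f' : Euc n → Euc n)
    (g : Fin m → Euc n → ℝ) (g' : Fin m → Euc n → Euc n)
    (Lf : ℝ) (Lg : Fin m → ℝ)
    (hAB : AssumptionAB f P1 P2 f' g g' Lf Lg)
    (c Llo : ℝ) (hc : 0 < c) (hLlo : 0 < Llo)
    (x ξ : ℕ → Euc n) (Lfs : ℕ → ℝ) (Lgs : ℕ → EuclideanSpace ℝ (Fin m))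
    (hseq : SCPlsSeq f P1 P2 f' g g' c Llo x ξ Lfs Lgs)
    (lam : ℕ → Fin m → ℝ)
    (hlam_nonneg : ∀ t i, 0 ≤ lam t i)
    (hcompl : ∀ t i, lam t i * barG g g' (x (t + 1)) (x t) (Lgs t) i = 0)
    (hfoc : ∀ t, ∃ u ∈ ConvexSubdiff P1 (x (t + 1)),
      f' (x t) - ξ t + (Lfs t + ∑ i, lam t i * Lgs t i) • (x (t + 1) - x t) + u
        + ∑ i, lam t i • g' i (x t) = 0) :
    (∃ M : ℝ, ∀ t i, lam t i ≤ M) ∧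
    ∀ xstar : Euc n, xstar ∈ seqClusterPts x →
      IsStationaryPt f P1 P2 f' g g' xstar :=
  stmt5_general f P1 P2 f' g g' Lf Lg hAB c Llo hc x ξ Lfs Lgs hseq lam hlam_nonneg hcompl hfoc
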